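/- arXiv:1301.5045 — 3 statements merged into one kernel-verified Lean document; each statement's English description precedes it below -/
import Mathlib

section
/- Let K be a field of characteristic zero and let f be a proper rational function in K(y) (the degree in y of its numerator is less than that of its denominator). Then there is at most one pair (g, r) of proper rational functions in K(y) such that f = D_y(g) + r, where r = a/b with a, b in K[y], deg(a) < deg(b), and b squarefree. -/
open Polynomial

noncomputable section

/-- A map is a derivation: it is additive and satisfies the Leibniz rule. -/
def IsDeriv {F : Type*} [CommRing F] (D : F → F) : Prop :=
  (∀ a b, D (a + b) = D a + D b) ∧ ∀ a b, D (a * b) = a * D b + b * D a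

/-- Degree in `x` of an element of `k[x][y]` (inner variable `x`, outer variable `y`). -/
def degX {k : Type*} [Field k] (Q : Polynomial (Polynomial k)) : ℕ :=
  Q.support.sup fun i => (Q.coeff i).natDegree

/-- Partial derivative with respect to `x` on `k[x][y]`. -/
def derivX {k : Type*} [Field k] (Q : Polynomial (Polynomial k)) : Polynomial (Polynomial k) :=
  Q.sum fun i a => Polynomial.C (Polynomial.derivative a) * Polynomial.X ^ i

/-- The embedding `k[x][y] → k(x)(y)`. -/
def toF {k : Type*} [Field k] : Polynomial (Polynomial k) →+* RatFunc (RatFunc k) :=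
  (algebraMap (Polynomial (RatFunc k)) (RatFunc (RatFunc k))).comp
    (Polynomial.mapRingHom (algebraMap (Polynomial k) (RatFunc k)))

/-- The embedding `k(x) → k(x)(y)`. -/
def ratToF {k : Type*} [Field k] : RatFunc k →+* RatFunc (RatFunc k) :=
  (algebraMap (Polynomial (RatFunc k)) (RatFunc (RatFunc k))).comp
    (Polynomial.C : RatFunc k →+* Polynomial (RatFunc k))

/-- The embedding `k(x)[y] → k(x)(y)`. -/
def kyToF {k : Type*} [Field k] : Polynomial (RatFunc k) →+* RatFunc (RatFunc k) :=
  algebraMap (Polynomial (RatFunc k)) (RatFunc (RatFunc k))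

/-- The embedding `k[x][y] → k(x)[y]`. -/
def toKy {k : Type*} [Field k] : Polynomial (Polynomial k) →+* Polynomial (RatFunc k) :=
  Polynomial.mapRingHom (algebraMap (Polynomial k) (RatFunc k))

/-- The embedding `k[y] → k[x][y]` (a polynomial in `y` viewed in `k[x][y]`). -/
def yToXY {k : Type*} [Field k] : Polynomial k →+* Polynomial (Polynomial k) :=
  Polynomial.mapRingHom (Polynomial.C : k →+* Polynomial k)

/-- The Hermite matrix associated with a factorisation `Q = Qs * Qneg`, with respect to the
monomial bases: its columns are the coefficient vectors (in `y`, coefficients in `k[x]`) of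
`Qs * D_y(y^j) - E * y^j` for `j < dm` (where `E = Qs * D_y(Qneg) / Qneg`) and of
`Qneg * y^j` for `j < dy - dm`. -/
def hermiteMat {k : Type*} [Field k] (Qs Qneg E : Polynomial (Polynomial k)) (dy dm : ℕ) :
    Matrix (Fin dy) (Fin dy) (Polynomial k) :=
  Matrix.of fun i j =>
    if (j : ℕ) < dm then
      (Qs * Polynomial.derivative (Polynomial.X ^ (j : ℕ)) - E * Polynomial.X ^ (j : ℕ)).coeff i
    else
      (Qneg * Polynomial.X ^ ((j : ℕ) - dm)).coeff i

/-! If `g₁ - g₂ = h ≠ 0` is proper, its denominator has an irreducible factor `p`, and the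
quotient rule shows that `p` occurs in the denominator of `D h` with multiplicity one more than
in that of `h` (here `p ∤ p'` because the characteristic is zero). Since `D h = r₂ - r₁` has a
squarefree denominator, this is impossible; hence `g₁ = g₂`, and then `r₁ = r₂`. -/

namespace RatFunc

variable {K : Type*} [Field K]

theorem degree_num_lt_degree_denom_iff [DecidableEq (RatFunc K)] (x : RatFunc K) :
    x.num.degree < x.denom.degree ↔ inftyValuation K x < 1 := by
  rcases eq_or_ne x 0 with rfl | hx
  · simp
  rw [inftyValuation_apply, inftyValuation_of_nonzero K hx, ← WithZero.exp_zero,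
    WithZero.exp_lt_exp, intDegree, ← natDegree_lt_natDegree_iff (num_ne_zero hx)]
  omega

theorem degree_num_sub_lt_degree_denom_sub {x y : RatFunc K}
    (hx : x.num.degree < x.denom.degree) (hy : y.num.degree < y.denom.degree) :
    (x - y).num.degree < (x - y).denom.degree := by
  classical
  rw [degree_num_lt_degree_denom_iff] at *
  exact (Valuation.map_sub _ x y).trans_lt (max_lt hx hy)

theorem denom_sub_dvd_of_dvd {x y : RatFunc K} {q : K[X]} (hq : q ≠ 0) (hx : x.denom ∣ q)
    (hy : y.denom ∣ q) : (x - y).denom ∣ q := by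
  obtain ⟨a, rfl⟩ := (denom_dvd hq).1 hx
  obtain ⟨b, rfl⟩ := (denom_dvd hq).1 hy
  exact (denom_dvd hq).2 ⟨a - b, by rw [map_sub, sub_div]⟩

theorem squarefree_denom_sub {x y : RatFunc K} (hx : Squarefree x.denom)
    (hy : Squarefree y.denom) : Squarefree (x - y).denom := by
  classical
  open UniqueFactorizationMonoid in
  have hxy : x.denom * y.denom ≠ 0 := mul_ne_zero x.denom_ne_zero y.denom_ne_zero
  refine (squarefree_radical (a := x.denom * y.denom)).squarefree_of_dvd
    (denom_sub_dvd_of_dvd radical_ne_zero ?_ ?_)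
  · exact (dvd_radical_iff hx.isRadical hxy).2 (dvd_mul_right _ _)
  · exact (dvd_radical_iff hy.isRadical hxy).2 (dvd_mul_left _ _)

theorem exists_prime_dvd_denom {x : RatFunc K} (hx : x ≠ 0)
    (hdeg : x.num.degree < x.denom.degree) : ∃ p, Prime p ∧ p ∣ x.denom := by
  have hpos : 0 < x.denom.natDegree :=
    natDegree_pos_iff_degree_pos.2 ((zero_le_degree_iff.2 (num_ne_zero hx)).trans_lt hdeg)
  obtain ⟨p, hp, hdvd⟩ := WfDvdMonoid.exists_irreducible_factor
    (not_isUnit_of_natDegree_pos _ hpos) x.denom_ne_zero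
  exact ⟨p, hp.prime, hdvd⟩

theorem pow_dvd_denom_of_mul_eq {x : RatFunc K} {A B p : K[X]} (hB : B ≠ 0)
    (hx : x * algebraMap K[X] (RatFunc K) B = algebraMap K[X] (RatFunc K) A) (hp : Prime p)
    (hpA : ¬ p ∣ A) {n : ℕ} (hpB : p ^ n ∣ B) : p ^ n ∣ x.denom := by
  have hxAB : x = algebraMap K[X] (RatFunc K) A / algebraMap K[X] (RatFunc K) B :=
    eq_div_of_mul_eq (algebraMap_ne_zero hB) hx
  obtain ⟨c, rfl⟩ := (denom_dvd hB).2 ⟨A, hxAB⟩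
  have hnum : x.num * c = A := by
    apply mul_left_cancel₀ x.denom_ne_zero
    rw [mul_left_comm, (num_mul_eq_mul_denom_iff hB).2 hxAB, mul_comm]
  exact hp.pow_dvd_of_dvd_mul_right n (fun hpc => hpA (hnum ▸ hpc.mul_left _)) hpB

end RatFunc

namespace IsDeriv

variable {K : Type*} [Field K] {D : RatFunc K → RatFunc K} (hD : IsDeriv D)
include hD

theorem map_sub (x y : RatFunc K) : D (x - y) = D x - D y := by
  have := hD.1 y (x - y)
  rw [add_sub_cancel] at this
  rw [this, add_sub_cancel_left]

variable (hDpoly : ∀ p : K[X],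
  D (algebraMap K[X] (RatFunc K) p) = algebraMap K[X] (RatFunc K) (derivative p))
include hDpoly

theorem map_div_mul_sq (a b : K[X]) (hb : b ≠ 0) :
    D (algebraMap K[X] (RatFunc K) a / algebraMap K[X] (RatFunc K) b)
      * algebraMap K[X] (RatFunc K) b ^ 2
      = algebraMap K[X] (RatFunc K) (derivative a * b - a * derivative b) := by
  have hb' := RatFunc.algebraMap_ne_zero hb
  have leibniz := hD.2 (algebraMap K[X] (RatFunc K) a / algebraMap K[X] (RatFunc K) b)
    (algebraMap K[X] (RatFunc K) b)
  rw [div_mul_cancel₀ _ hb', hDpoly, hDpoly] at leibniz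
  rw [_root_.map_sub, map_mul, map_mul, leibniz]
  field_simp
  ring

theorem mul_self_dvd_denom [CharZero K] {h : RatFunc K} {p : K[X]} (hp : Prime p)
    (hdvd : p ∣ h.denom) : p * p ∣ (D h).denom := by
  obtain ⟨n, q, hpq, hden⟩ := WfDvdMonoid.max_power_factor h.denom_ne_zero hp.irreducible
  have hq : q ≠ 0 := right_ne_zero_of_mul (hden ▸ h.denom_ne_zero)
  obtain ⟨e, rfl⟩ : ∃ e, n = e + 1 := by
    refine Nat.exists_eq_add_one.2 (Nat.pos_of_ne_zero ?_)
    rintro rfl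
    exact hpq (by simpa [hden] using hdvd)
  have hpa : ¬ p ∣ h.num := fun hpa =>
    hp.not_isUnit ((RatFunc.isCoprime_num_denom h).isUnit_of_dvd' hpa hdvd)
  have hpp' : ¬ p ∣ derivative p := by
    rw [dvd_derivative_iff, derivative_eq_zero]
    exact hp.irreducible.natDegree_pos.ne'
  have hpe : ¬ p ∣ C ((e : K) + 1) := fun hpe =>
    hp.not_isUnit (isUnit_of_dvd_unit hpe (isUnit_C.2 (Nat.cast_add_one_ne_zero e).isUnit))
  -- modulo `p`, `A` is `-(e + 1) * h.num * p' * q`, a product of non-multiples of `p`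
  set A := p * (derivative h.num * q - h.num * derivative q)
    - C ((e : K) + 1) * h.num * derivative p * q with hA
  have hpA : ¬ p ∣ A := by
    rw [dvd_sub_right (dvd_mul_right _ _)]
    simp only [hp.dvd_mul, not_or]
    exact ⟨⟨⟨hpe, hpa⟩, hpp'⟩, hpq⟩
  have hDh : D h * algebraMap K[X] (RatFunc K) (p ^ (e + 2) * q ^ 2)
      = algebraMap K[X] (RatFunc K) A := by
    have hpoly : derivative h.num * h.denom - h.num * derivative h.denom = p ^ e * A := by
      rw [hA, hden, derivative_mul, derivative_pow_succ]
      ring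
    have quotient := hD.map_div_mul_sq hDpoly h.num h.denom h.denom_ne_zero
    rw [RatFunc.num_div_denom, hpoly, hden] at quotient
    apply mul_left_cancel₀ (pow_ne_zero e (RatFunc.algebraMap_ne_zero hp.ne_zero))
    simp only [map_mul, map_pow] at quotient ⊢
    linear_combination quotient
  have hpow := RatFunc.pow_dvd_denom_of_mul_eq
    (mul_ne_zero (pow_ne_zero _ hp.ne_zero) (pow_ne_zero _ hq)) hDh hp hpA
    ((pow_dvd_pow p (Nat.le_add_left 2 e)).mul_right _)
  rwa [sq] at hpow

end IsDeriv

theorem stmt_0_general {K : Type*} [Field K] [CharZero K]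
    (D : RatFunc K → RatFunc K) (hDder : IsDeriv D)
    (hDval : ∀ p : Polynomial K,
      D (algebraMap (Polynomial K) (RatFunc K) p) =
        algebraMap (Polynomial K) (RatFunc K) (Polynomial.derivative p))
    (f : RatFunc K)
    (g₁ r₁ g₂ r₂ : RatFunc K)
    (hg₁ : g₁.num.degree < g₁.denom.degree)
    (hb₁ : Squarefree r₁.denom)
    (heq₁ : f = D g₁ + r₁)
    (hg₂ : g₂.num.degree < g₂.denom.degree)
    (hb₂ : Squarefree r₂.denom)
    (heq₂ : f = D g₂ + r₂) :
    g₁ = g₂ ∧ r₁ = r₂ := by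
  have hD : D (g₁ - g₂) = r₂ - r₁ := by
    rw [hDder.map_sub]
    linear_combination heq₂ - heq₁
  have hg : g₁ = g₂ := by
    by_contra hne
    obtain ⟨p, hp, hpd⟩ := RatFunc.exists_prime_dvd_denom (sub_ne_zero.2 hne)
      (RatFunc.degree_num_sub_lt_degree_denom_sub hg₁ hg₂)
    have hpp := hDder.mul_self_dvd_denom hDval hp hpd
    rw [hD] at hpp
    exact hp.not_isUnit (RatFunc.squarefree_denom_sub hb₂ hb₁ p hpp)
  subst hg
  exact ⟨rfl, add_left_cancel (heq₁.symm.trans heq₂)⟩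

/-- Lemma `le:unique`. Let `K` be a field of characteristic zero and `f` a
proper rational function in `K(y)`. Then there is at most one pair `(g, r)` of proper rational
functions in `K(y)` with `f = D_y(g) + r` and the denominator of `r` squarefree. -/
theorem stmt_0 {K : Type*} [Field K] [CharZero K]
    (D : RatFunc K → RatFunc K) (hDder : IsDeriv D)
    (hDval : ∀ p : Polynomial K,
      D (algebraMap (Polynomial K) (RatFunc K) p) =
        algebraMap (Polynomial K) (RatFunc K) (Polynomial.derivative p))
    (f : RatFunc K) (hf : f.num.degree < f.denom.degree)
    (g₁ r₁ g₂ r₂ : RatFunc K)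
    (hg₁ : g₁.num.degree < g₁.denom.degree)
    (hr₁ : r₁.num.degree < r₁.denom.degree)
    (hb₁ : Squarefree r₁.denom)
    (heq₁ : f = D g₁ + r₁)
    (hg₂ : g₂.num.degree < g₂.denom.degree)
    (hr₂ : r₂.num.degree < r₂.denom.degree)
    (hb₂ : Squarefree r₂.denom)
    (heq₂ : f = D g₂ + r₂) :
    g₁ = g₂ ∧ r₁ = r₂ :=
  stmt_0_general D hDder hDval f g₁ r₁ g₂ r₂ hg₁ hb₁ heq₁ hg₂ hb₂ heq₂
end
end

section
/- Under Hypothesis (H), the k(x)-linear map sending a pair (A, a) of polynomials in k(x)[y] with deg_y(A) < d_y^- and deg_y(a) < d_y* to the polynomial Q*·D_y(A) − (Q*·D_y(Q^-)/Q^-)·A + Q^-·a (of degree less than d_y in y) is bijective. Equivalently, for every P in k(x)[y] with deg_y(P) < d_y there is a unique pair (A, a) with deg_y(A) < d_y^- and deg_y(a) < d_y* such that P/Q = D_y(A/Q^-) + a/Q*. -/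
open Polynomial

noncomputable section

/-!
With `E = Q* (Q⁻)' / Q⁻`, the map `(A, a) ↦ Q* A' - E A + Q⁻ a` goes from a space of dimension
`d_y⁻ + d_y*` to one of dimension `d_y`, so it suffices to show that it is injective. If it
kills `(A, a)`, then `Q* · W(A, Q⁻) = (Q⁻)² a` for the Wronskian `W(A, N) = A N' - A' N`. Were
`Q⁻ ∤ A`, some prime `p` would divide `A` exactly `μ` times and `Q⁻` exactly `μ + ν + 1` times;
in characteristic zero `p` then divides `W(A, Q⁻)` exactly `2μ + ν` times, so, `Q*` being
squarefree, the left side is divisible by `p` at most `2μ + ν + 1` times, while the right side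
is divisible by `p^(2μ + 2ν + 2)`. Hence `Q⁻ ∣ A`, so `A = 0` by degree, and then `a = 0`.
Over `k(x)` the squarefreeness of `Q*` follows from that over `k[x]` by Gauss's lemma.
-/

section Derivation

variable {F : Type*} [Field F] {D : F → F}

theorem IsDeriv.map_div_mul_sq_s2 (hD : IsDeriv D) (x : F) {y : F} (hy : y ≠ 0) :
    D (x / y) * y ^ 2 = D x * y - x * D y := by
  have h := hD.2 (x / y) y
  rw [div_mul_cancel₀ x hy] at h
  rw [h]
  field_simp
  ring

theorem IsDeriv.div_mul_eq_map_div_add_div_iff (hD : IsDeriv D) {s n e p A a : F}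
    (hs : s ≠ 0) (hn : n ≠ 0) (he : e * n = s * D n) :
    p / (s * n) = D (A / n) + a / s ↔ p = s * D A - e * A + n * a := by
  have hquot : D (A / n) = (D A * n - A * D n) / n ^ 2 := by
    rw [eq_div_iff (pow_ne_zero 2 hn), hD.map_div_mul_sq_s2 A hn]
  rw [hquot, div_add_div _ _ (pow_ne_zero 2 hn) hs, div_eq_div_iff (mul_ne_zero hs hn)
    (mul_ne_zero (pow_ne_zero 2 hn) hs)]
  constructor
  · intro h
    apply mul_right_cancel₀ (mul_ne_zero (pow_ne_zero 2 hn) hs)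
    linear_combination h + s * n * A * he
  · intro h
    rw [h]
    linear_combination (-(s * n * A)) * he

end Derivation

theorem UniqueFactorizationMonoid.exists_prime_pow_mul_of_not_dvd {α : Type*}
    [CommMonoidWithZero α] [UniqueFactorizationMonoid α] {a b : α} (ha : a ≠ 0)
    (hb : b ≠ 0) (h : ¬ b ∣ a) :
    ∃ p u v : α, ∃ μ ν : ℕ, Prime p ∧ ¬ p ∣ u ∧ ¬ p ∣ v ∧
      a = p ^ μ * u ∧ b = p ^ (μ + ν + 1) * v := by
  obtain ⟨p, hp, hlt⟩ : ∃ p, Prime p ∧ emultiplicity p a < emultiplicity p b := by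
    simpa [dvd_iff_emultiplicity_le hb] using h
  have hfin : FiniteMultiplicity p a := .of_prime_left hp ha
  obtain ⟨u, hau, hu⟩ := hfin.exists_eq_pow_mul_and_not_dvd
  obtain ⟨w, rfl⟩ : p ^ (multiplicity p a + 1) ∣ b := by
    rw [pow_dvd_iff_le_emultiplicity]
    exact Order.add_one_le_of_lt (hfin.emultiplicity_eq_multiplicity ▸ hlt)
  obtain ⟨ν, v, hv, rfl⟩ := WfDvdMonoid.max_power_factor (right_ne_zero_of_mul hb) hp.irreducible
  exact ⟨p, u, v, _, ν, hp, hu, hv, hau, by rw [← mul_assoc, ← pow_add, add_right_comm]⟩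

namespace Polynomial

theorem wronskian_pow_mul_pow_mul {R : Type*} [CommRing R] (p u v : R[X]) (μ ν : ℕ) :
    wronskian (p ^ μ * u) (p ^ (μ + ν + 1) * v) =
      p ^ (2 * μ + ν) * (C ((ν : R) + 1) * derivative p * u * v + p * wronskian u v) := by
  cases μ with
  | zero =>
    simp only [wronskian, pow_zero, one_mul, zero_add, derivative_mul, derivative_pow,
      Nat.cast_add, Nat.cast_one, map_add, map_natCast, map_one, add_tsub_cancel_right, mul_zero]
    ring
  | succ μ =>
    simp only [wronskian, derivative_mul, derivative_pow, Nat.add_sub_cancel, Nat.cast_add,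
      Nat.cast_one, C_add, C_1]
    ring

theorem mul_mem_degreeLT {R : Type*} [Semiring R] {f p : R[X]} {m n : ℕ} (hf : f.natDegree ≤ m)
    (hp : p ∈ R[X]_n) : f * p ∈ R[X]_(m + n) := by
  rcases eq_or_ne p 0 with rfl | hp0
  · simp
  rw [mem_degreeLT, degree_eq_natDegree hp0, Nat.cast_lt] at hp
  rw [mem_degreeLT]
  refine (degree_le_of_natDegree_le natDegree_mul_le).trans_lt ?_
  exact_mod_cast (by omega : f.natDegree + p.natDegree < m + n)

section HermiteMap

variable {R : Type*} [CommRing R]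

def hermiteMap (S E N : R[X]) (hE : E.natDegree ≤ S.natDegree) :
    R[X]_(N.natDegree) × R[X]_(S.natDegree) →ₗ[R] R[X]_(N.natDegree + S.natDegree) where
  toFun Aa := ⟨S * derivative (Aa.1 : R[X]) - E * Aa.1 + N * Aa.2, by
    obtain ⟨⟨A, hA⟩, ⟨a, ha⟩⟩ := Aa
    have hA' : derivative A ∈ R[X]_(N.natDegree) :=
      mem_degreeLT.2 (degree_derivative_le.trans_lt (mem_degreeLT.1 hA))
    have hSE : S * derivative A - E * A ∈ R[X]_(N.natDegree + S.natDegree) :=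
      add_comm S.natDegree _ ▸ sub_mem (mul_mem_degreeLT le_rfl hA') (mul_mem_degreeLT hE hA)
    exact add_mem hSE (mul_mem_degreeLT le_rfl ha)⟩
  map_add' _ _ := by
    ext1
    simp only [Prod.fst_add, Prod.snd_add, Submodule.coe_add, derivative_add, AddMemClass.mk_add_mk]
    ring
  map_smul' _ _ := by ext1; simp [smul_sub]

end HermiteMap

theorem natDegree_le_of_mul_eq_mul_derivative {R : Type*} [CommRing R] [IsDomain R]
    {S E N : R[X]} (hN : N ≠ 0) (hE : E * N = S * derivative N) :
    E.natDegree ≤ S.natDegree := by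
  rcases eq_or_ne E 0 with rfl | hE0
  · simp
  have := natDegree_mul hE0 hN ▸ hE ▸ natDegree_mul_le (p := S) (q := derivative N)
  have := natDegree_derivative_le N
  omega

theorem pow_dvd_mul_derivative_pow {R : Type*} [CommSemiring R] (f : R[X]) (n : ℕ) :
    f ^ n ∣ f * derivative (f ^ n) := by
  cases n with
  | zero => simp
  | succ n => simpa [pow_succ'] using mul_dvd_mul_left f (pow_sub_one_dvd_derivative_of_pow_dvd
      (dvd_refl (f ^ (n + 1))))

theorem prod_pow_dvd_prod_mul_derivative {R ι : Type*} [CommSemiring R] [DecidableEq ι]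
    (s : Finset ι) (f : ι → R[X]) (e : ι → ℕ) :
    ∏ i ∈ s, f i ^ e i ∣ (∏ i ∈ s, f i) * derivative (∏ i ∈ s, f i ^ e i) := by
  induction s using Finset.induction_on with
  | empty => simp
  | insert a s ha ih =>
    simp only [Finset.prod_insert ha, derivative_mul]
    have hsplit : f a * (∏ i ∈ s, f i) *
        (derivative (f a ^ e a) * ∏ i ∈ s, f i ^ e i +
          f a ^ e a * derivative (∏ i ∈ s, f i ^ e i)) =
        (f a * derivative (f a ^ e a)) * ((∏ i ∈ s, f i ^ e i) * ∏ i ∈ s, f i) +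
          f a ^ e a * (f a * ((∏ i ∈ s, f i) * derivative (∏ i ∈ s, f i ^ e i))) := by
      ring
    rw [hsplit]
    exact dvd_add (mul_dvd_mul (pow_dvd_mul_derivative_pow _ _) (dvd_mul_right _ _))
      (mul_dvd_mul_left _ (ih.mul_left _))

section FractionRing

variable {R K : Type*} [CommRing R] [IsDomain R] [NormalizedGCDMonoid R] [Field K] [Algebra R K]
  [IsFractionRing R K]

theorem exists_isPrimitive_map_eq_C_mul {p : K[X]} (hp : p ≠ 0) :
    ∃ (r : R[X]) (c : K), r.IsPrimitive ∧ c ≠ 0 ∧ r.map (algebraMap R K) = C c * p := by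
  obtain ⟨b, hb, hmap⟩ := IsLocalization.integerNormalization_spec (nonZeroDivisors R) p
  set n := IsLocalization.integerNormalization (nonZeroDivisors R) p
  have hn : n ≠ 0 := fun h => hp (IsFractionRing.integerNormalization_eq_zero_iff.1 h)
  have hinj := IsFractionRing.injective R K
  have hcont : algebraMap R K n.content ≠ 0 :=
    (map_ne_zero_iff _ hinj).2 ((content_eq_zero_iff).not.2 hn)
  have hb0 : algebraMap R K b ≠ 0 := (map_ne_zero_iff _ hinj).2 (nonZeroDivisors.ne_zero hb)
  refine ⟨n.primPart, algebraMap R K b / algebraMap R K n.content, n.isPrimitive_primPart,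
    div_ne_zero hb0 hcont, mul_left_cancel₀ (C_ne_zero.2 hcont) ?_⟩
  have hprim :
      C (algebraMap R K n.content) * n.primPart.map (algebraMap R K) = n.map (algebraMap R K) := by
    rw [← map_C, ← Polynomial.map_mul, ← n.eq_C_content_mul_primPart]
  rw [hprim, hmap, Algebra.smul_def, algebraMap_apply, ← mul_assoc, ← C_mul,
    mul_div_cancel₀ _ hcont]

theorem squarefree_map_algebraMap {B : R[X]} (hB : Squarefree B) :
    Squarefree (B.map (algebraMap R K)) := by
  intro p hp
  have hp0 : p ≠ 0 := by
    rintro rfl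
    rw [mul_zero, zero_dvd_iff, Polynomial.map_eq_zero_iff (IsFractionRing.injective R K)] at hp
    exact hB.ne_zero hp
  obtain ⟨r, c, hr, hc, hrp⟩ := exists_isPrimitive_map_eq_C_mul (R := R) hp0
  have hrr : r * r ∣ B := by
    refine (hr.mul hr).dvd_of_fraction_map_dvd_fraction_map (K := K) ?_
    rw [Polynomial.map_mul, hrp, show C c * p * (C c * p) = C (c * c) * (p * p) by
      rw [C_mul]; ring]
    exact (isUnit_C.2 (mul_ne_zero hc hc).isUnit).mul_left_dvd.2 hp
  have hr' := (hr.isUnit_iff_isUnit_map (K := K)).1 (hB r hrr)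
  rw [hrp] at hr'
  exact isUnit_of_mul_isUnit_right hr'

end FractionRing

section CharZero

variable {K : Type*} [Field K] [CharZero K] {S E N : K[X]}

theorem _root_.Prime.not_dvd_derivative {p : K[X]} (hp : Prime p) : ¬ p ∣ derivative p := by
  rw [dvd_derivative_iff, derivative_eq_zero]
  exact hp.irreducible.natDegree_pos.ne'

theorem dvd_of_mul_wronskian_eq_sq_mul {S N A a : K[X]} (hS : Squarefree S) (hN : N ≠ 0)
    (h : S * wronskian A N = N ^ 2 * a) : N ∣ A := by
  by_contra hNA
  have hA : A ≠ 0 := by rintro rfl; exact hNA (dvd_zero N)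
  obtain ⟨p, u, v, μ, ν, hp, hpu, hpv, rfl, rfl⟩ :=
    UniqueFactorizationMonoid.exists_prime_pow_mul_of_not_dvd hA hN hNA
  set G := C ((ν : K) + 1) * derivative p * u * v + p * wronskian u v
  have hpG : ¬ p ∣ G := by
    intro hG
    have hν : IsUnit (C ((ν : K) + 1)) := isUnit_C.mpr (Nat.cast_add_one_ne_zero ν).isUnit
    have : p ∣ C ((ν : K) + 1) * derivative p * u * v := by
      simpa only [G, add_sub_cancel_right] using dvd_sub hG (dvd_mul_right p (wronskian u v))
    rcases hp.dvd_or_dvd this with h₁ | h₁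
    · rcases hp.dvd_or_dvd h₁ with h₂ | h₂
      · rcases hp.dvd_or_dvd h₂ with h₃ | h₃
        · exact hp.not_isUnit (isUnit_of_dvd_unit h₃ hν)
        · exact hp.not_dvd_derivative h₃
      · exact hpu h₂
    · exact hpv h₁
  have hSG : S * G = p ^ 2 * (p ^ ν * v ^ 2 * a) := by
    rw [wronskian_pow_mul_pow_mul] at h
    apply mul_left_cancel₀ (pow_ne_zero (2 * μ + ν) hp.ne_zero)
    linear_combination h
  have hp2 : p ^ 2 ∣ S := hp.pow_dvd_of_dvd_mul_right 2 hpG (hSG ▸ dvd_mul_right _ _)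
  exact hp.not_isUnit (hS p (by simpa [sq] using hp2))

theorem hermiteMap_injective (hS : Squarefree S) (hN : N ≠ 0) (hE : E * N = S * derivative N) :
    Function.Injective (hermiteMap S E N (natDegree_le_of_mul_eq_mul_derivative hN hE)) := by
  rw [← LinearMap.ker_eq_bot, LinearMap.ker_eq_bot']
  rintro ⟨⟨A, hA⟩, ⟨a, ha⟩⟩ h
  replace h : S * derivative A - E * A + N * a = 0 := congrArg Subtype.val h
  have hNA : N ∣ A := dvd_of_mul_wronskian_eq_sq_mul hS hN (a := a) <| by
    rw [wronskian]
    linear_combination (-N) * h - A * hE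
  have hA0 : A = 0 := eq_zero_of_dvd_of_degree_lt hNA <|
    (mem_degreeLT.1 hA).trans_eq (degree_eq_natDegree hN).symm
  subst hA0
  have ha0 : a = 0 := by simpa [hN] using h
  subst ha0
  rfl

theorem hermiteMap_bijective (hS : Squarefree S) (hN : N ≠ 0) (hE : E * N = S * derivative N) :
    Function.Bijective (hermiteMap S E N (natDegree_le_of_mul_eq_mul_derivative hN hE)) := by
  have hinj := hermiteMap_injective hS hN hE
  refine ⟨hinj, (LinearMap.injective_iff_surjective_of_finrank_eq_finrank ?_).1 hinj⟩
  exact (degreeLT.addLinearEquiv K _ _).finrank_eq.symm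

theorem existsUnique_hermite_eq (hS : Squarefree S) (hN : N ≠ 0) (hE : E * N = S * derivative N)
    {P : K[X]} (hP : P.degree < ↑(N.natDegree + S.natDegree)) :
    ∃! Aa : K[X] × K[X], Aa.1.degree < N.natDegree ∧ Aa.2.degree < S.natDegree ∧
      S * derivative Aa.1 - E * Aa.1 + N * Aa.2 = P := by
  have hbij := hermiteMap_bijective hS hN hE
  obtain ⟨⟨⟨A, hA⟩, ⟨a, ha⟩⟩, hAa⟩ := hbij.2 ⟨P, mem_degreeLT.2 hP⟩
  refine ⟨(A, a), ⟨mem_degreeLT.1 hA, mem_degreeLT.1 ha, congrArg Subtype.val hAa⟩, ?_⟩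
  rintro ⟨B, b⟩ ⟨hB, hb, hBb⟩
  have := @hbij.1 ⟨⟨B, mem_degreeLT.2 hB⟩, ⟨b, mem_degreeLT.2 hb⟩⟩ _
    (Subtype.ext (hBb.trans (congrArg Subtype.val hAa).symm))
  simp only [Prod.mk.injEq, Subtype.mk.injEq] at this
  rw [this.1, this.2]

theorem existsUnique_div_eq_deriv_div_add_div (hS : Squarefree S) (hN : N ≠ 0)
    (hNS : N ∣ S * derivative N) {D : RatFunc K → RatFunc K} (hD : IsDeriv D)
    (hDpoly : ∀ A : K[X], D (algebraMap K[X] (RatFunc K) A) = algebraMap _ _ (derivative A))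
    {P : K[X]} (hP : P.degree < ↑(N.natDegree + S.natDegree)) :
    ∃! Aa : K[X] × K[X], Aa.1.degree < N.natDegree ∧ Aa.2.degree < S.natDegree ∧
      algebraMap K[X] (RatFunc K) P / algebraMap _ _ (S * N) =
        D (algebraMap _ _ Aa.1 / algebraMap _ _ N) + algebraMap _ _ Aa.2 / algebraMap _ _ S := by
  obtain ⟨E, hE⟩ := hNS
  have hE' : E * N = S * derivative N := by rw [hE, mul_comm]
  refine (existsUnique_congr fun Aa => ?_).1 (existsUnique_hermite_eq hS hN hE' hP)
  have hinj := IsFractionRing.injective K[X] (RatFunc K)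
  have hmap : ∀ {A : K[X]}, A ≠ 0 → algebraMap K[X] (RatFunc K) A ≠ 0 :=
    fun hA => (map_ne_zero_iff _ hinj).2 hA
  rw [map_mul, hD.div_mul_eq_map_div_add_div_iff (hmap hS.ne_zero) (hmap hN)
    (e := algebraMap _ _ E) (by rw [hDpoly, ← map_mul, ← map_mul, hE']), hDpoly, ← map_mul,
    ← map_mul, ← map_mul, ← map_sub, ← map_add, hinj.eq_iff, eq_comm]

end CharZero

end Polynomial

theorem stmt_2_general {k : Type*} [Field k] [CharZero k]
    (Q : Polynomial (Polynomial k))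
    (hQ : Q ≠ 0)
    (m : ℕ) (q : Polynomial k) (Qi : ℕ → Polynomial (Polynomial k))
    (hfac : Q = Polynomial.C q * ∏ i ∈ Finset.range m, Qi i ^ (i + 1))
    (hQisqf : ∀ i < m, Squarefree (Qi i))
    (hQicop : ∀ i < m, ∀ j < m, i ≠ j → IsRelPrime (Qi i) (Qi j))
    (Qs Qneg : Polynomial (Polynomial k))
    (hQs : Qs = ∏ i ∈ Finset.range m, Qi i)
    (hQneg : Q = Qs * Qneg)
    (Dy : RatFunc (RatFunc k) → RatFunc (RatFunc k)) (hDy : IsDeriv Dy)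
    (hDyval : ∀ A : Polynomial (RatFunc k), Dy (kyToF A) = kyToF (Polynomial.derivative A)) :
    ∀ P' : Polynomial (RatFunc k), P'.degree < (Q.natDegree : WithBot ℕ) →
      ∃! Aa : Polynomial (RatFunc k) × Polynomial (RatFunc k),
        Aa.1.degree < (Qneg.natDegree : WithBot ℕ) ∧
        Aa.2.degree < (Qs.natDegree : WithBot ℕ) ∧
        kyToF P' / toF Q = Dy (kyToF Aa.1 / toF Qneg) + kyToF Aa.2 / toF Qs := by
  classical
  intro P' hP'
  have hQs0 : Qs ≠ 0 := left_ne_zero_of_mul (hQneg ▸ hQ)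
  have hQneg0 : Qneg ≠ 0 := right_ne_zero_of_mul (hQneg ▸ hQ)
  have hinj : Function.Injective (algebraMap k[X] (RatFunc k)) := IsFractionRing.injective _ _
  have hsq : Squarefree Qs := hQs ▸ Finset.squarefree_prod_of_pairwise_isCoprime
    (fun i hi j hj hij => hQicop i (Finset.mem_range.1 hi) j (Finset.mem_range.1 hj) hij)
    (fun i hi => hQisqf i (Finset.mem_range.1 hi))
  have hQneg' : Qneg = C q * ∏ i ∈ Finset.range m, Qi i ^ i := by
    refine mul_left_cancel₀ hQs0 ?_
    rw [← hQneg, hfac, hQs, mul_left_comm, ← Finset.prod_mul_distrib]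
    simp only [pow_succ']
  have hdvd : Qneg ∣ Qs * derivative Qneg := by
    rw [hQneg', derivative_C_mul, mul_left_comm, hQs]
    exact mul_dvd_mul_left _ (prod_pow_dvd_prod_mul_derivative _ _ _)
  have hdeg : Q.natDegree = Qneg.natDegree + Qs.natDegree := by
    rw [hQneg, natDegree_mul hQs0 hQneg0, add_comm]
  have key := existsUnique_div_eq_deriv_div_add_div (P := P') (squarefree_map_algebraMap hsq)
    ((Polynomial.map_ne_zero_iff hinj).2 hQneg0)
    (by simpa only [derivative_map, Polynomial.map_mul] using Polynomial.map_dvd _ hdvd) hDy hDyval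
    (by rwa [natDegree_map_eq_of_injective hinj, natDegree_map_eq_of_injective hinj, ← hdeg])
  simpa only [natDegree_map_eq_of_injective hinj, hQneg, toF, toKy, kyToF, RingHom.comp_apply,
    coe_mapRingHom, Polynomial.map_mul] using key

/-- Lemma `le:HOsystem`, in its equivalent decomposition form. Under
Hypothesis (H), for every `P'` in `k(x)[y]` with `deg_y(P') < d_y` there is a unique pair
`(A, a)` of polynomials in `k(x)[y]` with `deg_y(A) < d_y⁻` and `deg_y(a) < d_y*` such that
`P'/Q = D_y(A/Q⁻) + a/Q*`. -/
theorem stmt_2 {k : Type*} [Field k] [CharZero k]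
    (P Q : Polynomial (Polynomial k))
    (hP : P ≠ 0) (hQ : Q ≠ 0)
    (hPQdeg : P.degree < Q.degree)
    (hPQcop : IsRelPrime P Q)
    (hQprimY : Q.IsPrimitive)
    (m : ℕ) (hm : 0 < m) (q : Polynomial k) (Qi : ℕ → Polynomial (Polynomial k))
    (hfac : Q = Polynomial.C q * ∏ i ∈ Finset.range m, Qi i ^ (i + 1))
    (hQiprim : ∀ i < m, (Qi i).IsPrimitive)
    (hQisqf : ∀ i < m, Squarefree (Qi i))
    (hQicop : ∀ i < m, ∀ j < m, i ≠ j → IsRelPrime (Qi i) (Qi j))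
    (hQim : 0 < (Qi (m - 1)).natDegree)
    (Qs Qneg : Polynomial (Polynomial k))
    (hQs : Qs = ∏ i ∈ Finset.range m, Qi i)
    (hQneg : Q = Qs * Qneg)
    (Dy : RatFunc (RatFunc k) → RatFunc (RatFunc k)) (hDy : IsDeriv Dy)
    (hDyval : ∀ A : Polynomial (RatFunc k), Dy (kyToF A) = kyToF (Polynomial.derivative A)) :
    ∀ P' : Polynomial (RatFunc k), P'.degree < (Q.natDegree : WithBot ℕ) →
      ∃! Aa : Polynomial (RatFunc k) × Polynomial (RatFunc k),
        Aa.1.degree < (Qneg.natDegree : WithBot ℕ) ∧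
        Aa.2.degree < (Qs.natDegree : WithBot ℕ) ∧
        kyToF P' / toF Q = Dy (kyToF Aa.1 / toF Qneg) + kyToF Aa.2 / toF Qs :=
  stmt_2_general Q hQ m q Qi hfac hQisqf hQicop Qs Qneg hQs hQneg Dy hDy hDyval
end
end

section
/- Under Hypothesis (H), let δ = det H(Q) and let B, b in k[x,y] be such that deg_y(B) < d_y^-, deg_y(b) < d_y*, and P/Q = D_y(B/(δ·Q^-)) + b/(δ·Q*) (i.e., B = δ·A and b = δ·a for the unique Hermite decomposition pair (A,a) over k(x)). Let x_0 in k be lucky for Q. Then δ(x_0) ≠ 0, and (B(x_0,y), b(x_0,y)) is the unique pair of polynomials in k[y] of degrees less than d_y^- and d_y* respectively such that P(x_0,y)/Q(x_0,y) = D_y( B(x_0,y)/(δ(x_0)·Q^-(x_0,y)) ) + b(x_0,y)/(δ(x_0)·Q*(x_0,y)). -/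
open Polynomial

noncomputable section

/-! Clearing denominators turns the Hermite decomposition into the polynomial identity
`δ · P = Q* · B' - E · B + Q⁻ · b`, where `E = Q* · Q⁻' / Q⁻`; being polynomial, it survives
specialisation at `x₀`. Luckiness says that `gcd(Q₀, Q₀')`, a multiple of `Q⁻₀`, has degree
`deg Q⁻`, i.e. that `Q*₀` is coprime to `Q₀' / Q⁻₀ = Q*₀' + E₀`. Under this coprimality the
specialised Hermite map `(A, a) ↦ Q*₀ · A' - E₀ · A + Q⁻₀ · a` is injective on pairs with
`deg A < deg Q⁻`: the identity says `Q*₀ · (A / Q⁻₀)' = -a`, so a prime `p` of the reduced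
denominator of `A / Q⁻₀` would occur squared in `Q*₀`, and then also divide `Q*₀' + E₀`. Hence
the specialised Hermite matrix, which is `H(Q)` evaluated at `x₀`, has nonzero determinant
`δ(x₀)`, and the specialised identity determines `(B(x₀, y), b(x₀, y))`. -/

theorem leibniz_div {F : Type*} [Field F] {D : F → F}
    (hD : ∀ a b, D (a * b) = a * D b + b * D a) (x : F) {y : F} (hy : y ≠ 0) :
    D (x / y) = (y * D x - x * D y) / y ^ 2 := by
  have h := hD (x / y) y
  rw [div_mul_cancel₀ x hy] at h
  rw [eq_div_iff (pow_ne_zero 2 hy)]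
  field_simp at h
  linear_combination -h

theorem degree_mul_lt_add {R : Type*} [Semiring R] {p q : R[X]} {m n : ℕ}
    (hp : p.degree < m) (hq : q.degree ≤ n) : (p * q).degree < ↑(m + n) := by
  rcases eq_or_ne q 0 with rfl | hq0
  · simp
  · calc (p * q).degree ≤ p.degree + q.degree := degree_mul_le _ _
      _ < ↑(m + n) := WithBot.add_lt_add_of_lt_of_le (degree_ne_bot.2 hq0) hp hq

section HermiteMap
variable {K : Type*} [Field K]

local notation "am" => algebraMap K[X] (RatFunc K)

theorem div_eq_deriv_div_add_div_iff {D : RatFunc K → RatFunc K}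
    (hD : ∀ a b, D (a * b) = a * D b + b * D a)
    (hDval : ∀ p : K[X], D (am p) = am (derivative p))
    {P Qs Qneg E B b : K[X]} {c : K} (hc : c ≠ 0) (hQs : Qs ≠ 0) (hQneg : Qneg ≠ 0)
    (hE : E * Qneg = Qs * derivative Qneg) :
    am P / am (Qs * Qneg) = D (am B / am (C c * Qneg)) + am b / am (C c * Qs) ↔
      C c * P = Qs * derivative B - E * B + Qneg * b := by
  have hinj : Function.Injective am := IsFractionRing.injective _ _
  have hc' : am (C c) ≠ 0 := by simpa using hc
  have hQs' : am Qs ≠ 0 := (map_ne_zero_iff _ hinj).2 hQs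
  have hQneg' : am Qneg ≠ 0 := (map_ne_zero_iff _ hinj).2 hQneg
  have hE' : am E * am Qneg = am Qs * am (derivative Qneg) := by
    simpa only [map_mul] using congrArg am hE
  have hrhs : D (am B / am (C c * Qneg)) + am b / am (C c * Qs) =
      am (Qs * derivative B - E * B + Qneg * b) / am (C c * (Qs * Qneg)) := by
    rw [leibniz_div hD _ (by simp [hc, hQneg']), hDval, hDval, derivative_C_mul]
    simp only [map_mul, map_add, map_sub]
    field_simp
    linear_combination am B * hE'
  have hden : am (Qs * Qneg) ≠ 0 := by simp [hQs', hQneg']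
  rw [hrhs, div_eq_div_iff hden (by simp [hc, hQs', hQneg']), ← map_mul, ← map_mul, hinj.eq_iff]
  exact ⟨fun h => mul_right_cancel₀ (mul_ne_zero hQs hQneg) (by linear_combination h),
    fun h => by linear_combination (Qs * Qneg) * h⟩

theorem degree_lt_of_mul_eq_mul_derivative {S N E : K[X]} (hS : S ≠ 0) (hN : N ≠ 0)
    (hE : E * N = S * derivative N) : E.degree < S.natDegree := by
  have h := congrArg degree hE
  rw [degree_mul, degree_mul] at h
  have hlt : E.degree + N.degree < S.degree + N.degree :=
    h ▸ WithBot.add_lt_add_left (degree_ne_bot.2 hS) (degree_derivative_lt hN)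
  exact degree_eq_natDegree hS ▸ lt_of_add_lt_add_right hlt

theorem degree_hermite_lt {Qs Qneg E A a : K[X]} (hQs : Qs ≠ 0) (hQneg : Qneg ≠ 0)
    (hE : E * Qneg = Qs * derivative Qneg) (hA : A.degree < Qneg.natDegree)
    (ha : a.degree < Qs.natDegree) :
    (Qs * derivative A - E * A + Qneg * a).degree < ↑(Qs.natDegree + Qneg.natDegree) := by
  have h1 : (Qs * derivative A).degree < ↑(Qs.natDegree + Qneg.natDegree) := by
    rw [mul_comm, add_comm]
    exact degree_mul_lt_add (degree_derivative_le.trans_lt hA) degree_le_natDegree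
  have h2 : (E * A).degree < ↑(Qs.natDegree + Qneg.natDegree) :=
    degree_mul_lt_add (degree_lt_of_mul_eq_mul_derivative hQs hQneg hE) hA.le
  have h3 : (Qneg * a).degree < ↑(Qs.natDegree + Qneg.natDegree) := by
    rw [mul_comm]
    exact degree_mul_lt_add ha degree_le_natDegree
  exact (degree_add_le _ _).trans_lt (max_lt ((degree_sub_le _ _).trans_lt (max_lt h1 h2)) h3)

theorem isCoprime_derivative_add_of_natDegree_gcd [DecidableEq K] {Qs Qneg E : K[X]}
    (hQs : Qs ≠ 0) (hQneg : Qneg ≠ 0) (hE : E * Qneg = Qs * derivative Qneg)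
    (hgcd : (gcd (Qs * Qneg) (derivative (Qs * Qneg))).natDegree = Qneg.natDegree) :
    IsCoprime Qs (derivative Qs + E) := by
  have hdQ : derivative (Qs * Qneg) = Qneg * (derivative Qs + E) := by
    rw [derivative_mul]
    linear_combination -hE
  have hdvd : Qneg * gcd Qs (derivative Qs + E) ∣ gcd (Qs * Qneg) (derivative (Qs * Qneg)) :=
    dvd_gcd (by rw [mul_comm Qs]; exact mul_dvd_mul_left _ (gcd_dvd_left _ _))
      (hdQ ▸ mul_dvd_mul_left _ (gcd_dvd_right _ _))
  have hg : gcd Qs (derivative Qs + E) ≠ 0 := gcd_ne_zero_of_left hQs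
  have hdeg := natDegree_le_of_dvd hdvd (gcd_ne_zero_of_left (mul_ne_zero hQs hQneg))
  rw [natDegree_mul hQneg hg, hgcd] at hdeg
  refine (gcd_isUnit_iff _ _).1 (isUnit_iff_degree_eq_zero.2 ?_)
  rw [degree_eq_natDegree hg]
  exact_mod_cast (by omega : (gcd Qs (derivative Qs + E)).natDegree = 0)

theorem dvd_derivative_add_of_sq_dvd {S N E p : K[X]} (hN : N ≠ 0)
    (hE : E * N = S * derivative N) (hp : Irreducible p) (hpS : p ^ 2 ∣ S) (hpN : p ∣ N) :
    p ∣ derivative S + E := by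
  have hpS' : p ∣ derivative S := by simpa using pow_sub_one_dvd_derivative_of_pow_dvd hpS
  obtain ⟨s, w, hw, rfl⟩ := WfDvdMonoid.max_power_factor hN hp
  obtain ⟨s, rfl⟩ : ∃ t, s = t + 1 := by
    rcases s with _ | t
    · exact absurd (by simpa using hpN) hw
    · exact ⟨t, rfl⟩
  have hEw : p ^ (s + 1) * p ∣ p ^ (s + 1) * (E * w) := by
    have hN' : p ^ s ∣ derivative (p ^ (s + 1) * w) := by
      simpa using pow_sub_one_dvd_derivative_of_pow_dvd (dvd_mul_right (p ^ (s + 1)) w)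
    calc p ^ (s + 1) * p = p ^ 2 * p ^ s := by ring
      _ ∣ S * derivative (p ^ (s + 1) * w) := mul_dvd_mul hpS hN'
      _ = p ^ (s + 1) * (E * w) := by rw [← hE]; ring
  have hpE : p ∣ E := by
    rcases hp.prime.dvd_mul.1 ((mul_dvd_mul_iff_left (pow_ne_zero _ hp.ne_zero)).1 hEw) with h | h
    · exact h
    · exact absurd h hw
  exact dvd_add hpS' hpE

variable [CharZero K]

theorem exists_wronskian_eq_pow_mul {p F u : K[X]} (hp : Irreducible p) (hF : ¬p ∣ F)
    (hu : ¬p ∣ u) (n : ℕ) :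
    ∃ W, derivative F * (p ^ (n + 1) * u) - F * derivative (p ^ (n + 1) * u) = p ^ n * W ∧
      ¬p ∣ W := by
  refine ⟨derivative F * p * u - F * (C ((n : K) + 1) * derivative p * u + p * derivative u),
    by rw [derivative_mul, derivative_pow_succ]; ring, fun hW => ?_⟩
  have hpn : ¬p ∣ C ((n : K) + 1) := fun h =>
    hp.not_isUnit (isUnit_of_dvd_unit h (isUnit_C.2 (Nat.cast_add_one_ne_zero n).isUnit))
  have hpp' : ¬p ∣ derivative p := fun h => hp.not_isUnit (hp.separable.isUnit_of_dvd' dvd_rfl h)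
  have hdvd : p ∣ F * (C ((n : K) + 1) * derivative p * u) := by
    convert dvd_sub (dvd_mul_right p (derivative F * u - F * derivative u)) hW using 1
    ring
  simp only [hp.prime.dvd_mul, hF, hpn, hpp', hu, or_self] at hdvd

theorem sq_dvd_of_mul_wronskian_eq {S F D a p : K[X]} (hFD : IsCoprime F D) (hD : D ≠ 0)
    (h : S * (derivative F * D - F * derivative D) = a * D ^ 2) (hp : Irreducible p)
    (hpD : p ∣ D) : p ^ 2 ∣ S := by
  obtain ⟨m, u, hu, rfl⟩ := WfDvdMonoid.max_power_factor hD hp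
  obtain ⟨n, rfl⟩ : ∃ n, m = n + 1 := by
    rcases m with _ | n
    · exact absurd (by simpa using hpD) hu
    · exact ⟨n, rfl⟩
  have hF : ¬p ∣ F := fun hpF => hp.not_isUnit (hFD.isUnit_of_dvd' hpF hpD)
  obtain ⟨W, hW, hpW⟩ := exists_wronskian_eq_pow_mul hp hF hu n
  have hSW : p ^ (n + 2) ∣ S * W := by
    refine ⟨a * u ^ 2, mul_left_cancel₀ (pow_ne_zero n hp.ne_zero) ?_⟩
    rw [hW] at h
    linear_combination h
  exact (pow_dvd_pow p (by omega)).trans (hp.prime.pow_dvd_of_dvd_mul_right _ hpW hSW)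

theorem eq_zero_of_hermite_eq_zero {Qs Qneg E A a : K[X]} (hQneg : Qneg ≠ 0)
    (hE : E * Qneg = Qs * derivative Qneg) (hcop : IsCoprime Qs (derivative Qs + E))
    (hA : A.degree < Qneg.natDegree) (h : Qs * derivative A - E * A + Qneg * a = 0) :
    A = 0 ∧ a = 0 := by
  classical
  have hA0 : A = 0 := by
    by_contra hA0
    have hg : GCDMonoid.gcd A Qneg ≠ 0 := gcd_ne_zero_of_right hQneg
    obtain ⟨F, hF⟩ := gcd_dvd_left A Qneg
    obtain ⟨D, hD⟩ := gcd_dvd_right A Qneg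
    have hFD : IsCoprime F D := by
      have eF : A / GCDMonoid.gcd A Qneg = F := by nth_rw 1 [hF]; exact mul_div_cancel_left₀ _ hg
      have eD : Qneg / GCDMonoid.gcd A Qneg = D := by
        nth_rw 1 [hD]; exact mul_div_cancel_left₀ _ hg
      simpa only [eF, eD] using isCoprime_div_gcd_div_gcd (p := A) hQneg
    generalize GCDMonoid.gcd A Qneg = g at hg hF hD
    have hD0 : D ≠ 0 := by rintro rfl; simp [hQneg] at hD
    have hDunit : ¬IsUnit D := fun hu => by
      have hdvd : Qneg ∣ A := by rw [hD, hF, hu.mul_right_dvd]; exact dvd_mul_right g F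
      have hle := degree_le_of_dvd hdvd hA0
      rw [degree_eq_natDegree hQneg] at hle
      exact (hle.trans_lt hA).false
    have hwr : Qs * (derivative F * D - F * derivative D) = -a * D ^ 2 := by
      refine mul_left_cancel₀ (pow_ne_zero 2 hg) ?_
      rw [hF, hD, derivative_mul] at h
      rw [hD, derivative_mul] at hE
      linear_combination (g * D) * h + (g * F) * hE
    obtain ⟨p, hp, hpD⟩ := WfDvdMonoid.exists_irreducible_factor hDunit hD0
    have hpS := sq_dvd_of_mul_wronskian_eq hFD hD0 hwr hp hpD
    have hpE := dvd_derivative_add_of_sq_dvd hQneg hE hp hpS (hpD.trans ⟨g, by rw [hD, mul_comm]⟩)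
    exact hp.not_isUnit (hcop.isUnit_of_dvd' ((dvd_pow_self p two_ne_zero).trans hpS) hpE)
  subst hA0
  simpa [hQneg] using h

theorem hermite_injective {Qs Qneg E A A' a a' : K[X]} (hQneg : Qneg ≠ 0)
    (hE : E * Qneg = Qs * derivative Qneg) (hcop : IsCoprime Qs (derivative Qs + E))
    (hA : A.degree < Qneg.natDegree) (hA' : A'.degree < Qneg.natDegree)
    (h : Qs * derivative A - E * A + Qneg * a = Qs * derivative A' - E * A' + Qneg * a') :
    A = A' ∧ a = a' := by
  obtain ⟨hA0, ha0⟩ := eq_zero_of_hermite_eq_zero (A := A - A') (a := a - a') hQneg hE hcop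
    ((degree_sub_le _ _).trans_lt (max_lt hA hA')) (by rw [derivative_sub]; linear_combination h)
  exact ⟨sub_eq_zero.1 hA0, sub_eq_zero.1 ha0⟩

end HermiteMap

section HermiteMatrix
variable {R : Type*} [CommRing R]

-- `hermiteMat` over an arbitrary coefficient ring, so that it can be specialised.
def hermiteColumn (Qs Qneg E : R[X]) (dm j : ℕ) : R[X] :=
  if j < dm then Qs * derivative (X ^ j) - E * X ^ j else Qneg * X ^ (j - dm)

def hermiteMatrix (Qs Qneg E : R[X]) (dy dm : ℕ) : Matrix (Fin dy) (Fin dy) R :=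
  Matrix.of fun i j => (hermiteColumn Qs Qneg E dm j).coeff i

theorem hermiteMat_eq_hermiteMatrix {k : Type*} [Field k] (Qs Qneg E : k[X][X]) (dy dm : ℕ) :
    hermiteMat Qs Qneg E dy dm = hermiteMatrix Qs Qneg E dy dm := by
  ext i j
  simp only [hermiteMat, hermiteMatrix, hermiteColumn, Matrix.of_apply]
  split_ifs <;> rfl

theorem hermiteMatrix_map {S : Type*} [CommRing S] (f : R →+* S) (Qs Qneg E : R[X])
    (dy dm : ℕ) :
    (hermiteMatrix Qs Qneg E dy dm).map f =
      hermiteMatrix (Qs.map f) (Qneg.map f) (E.map f) dy dm := by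
  ext i j
  simp only [hermiteMatrix, hermiteColumn, Matrix.map_apply, Matrix.of_apply, ← coeff_map]
  split_ifs <;> simp [← derivative_map]

theorem coeff_sum_C_mul_hermiteColumn (Qs Qneg E : R[X]) {dy : ℕ} (dm : ℕ) (v : Fin dy → R)
    (i : Fin dy) :
    (∑ j, C (v j) * hermiteColumn Qs Qneg E dm j).coeff i =
      (hermiteMatrix Qs Qneg E dy dm).mulVec v i := by
  simp [finsetSum_coeff, Matrix.mulVec, dotProduct, hermiteMatrix, mul_comm]

theorem sum_C_mul_hermiteColumn (Qs Qneg E : R[X]) {dy : ℕ} (dm : ℕ) (v : Fin dy → R) :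
    ∑ j, C (v j) * hermiteColumn Qs Qneg E dm j =
      Qs * derivative (∑ j : Fin dy with j.val < dm, C (v j) * X ^ (j : ℕ)) -
        E * (∑ j : Fin dy with j.val < dm, C (v j) * X ^ (j : ℕ)) +
        Qneg * ∑ j : Fin dy with ¬j.val < dm, C (v j) * X ^ ((j : ℕ) - dm) := by
  rw [← Finset.sum_filter_add_sum_filter_not _ (fun j : Fin dy => (j : ℕ) < dm)]
  simp only [map_sum, derivative_C_mul, Finset.mul_sum, ← Finset.sum_sub_distrib]
  congr 1 <;> refine Finset.sum_congr rfl fun j hj => ?_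
  · rw [hermiteColumn, if_pos (Finset.mem_filter.1 hj).2]
    ring
  · rw [hermiteColumn, if_neg (Finset.mem_filter.1 hj).2]
    ring

theorem coeff_sum_C_mul_X_pow {ι : Type*} (s : Finset ι) (v : ι → R) {e : ι → ℕ}
    (he : Set.InjOn e s) {j : ι} (hj : j ∈ s) :
    (∑ i ∈ s, C (v i) * X ^ e i).coeff (e j) = v j := by
  rw [finsetSum_coeff, Finset.sum_eq_single_of_mem j hj fun i hi hij => ?_]
  · simp
  · rw [coeff_C_mul_X_pow, if_neg fun h => hij (he hi hj h.symm)]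

theorem eq_zero_of_sum_C_mul_X_pow_eq_zero {dy dm : ℕ} {v : Fin dy → R}
    (hA : ∑ j : Fin dy with j.val < dm, C (v j) * X ^ (j : ℕ) = 0)
    (ha : ∑ j : Fin dy with ¬j.val < dm, C (v j) * X ^ ((j : ℕ) - dm) = 0) : v = 0 := by
  funext j
  by_cases hj : (j : ℕ) < dm
  · have h := congrArg (coeff · (j : ℕ)) hA
    rwa [coeff_zero, coeff_sum_C_mul_X_pow _ v Fin.val_injective.injOn (by simpa using hj)] at h
  · have he : Set.InjOn (fun i : Fin dy => (i : ℕ) - dm) {i | ¬(i : ℕ) < dm} :=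
      fun i hi i' hi' h => Fin.ext (by simp only [Set.mem_ofPred_eq] at hi hi' h; omega)
    have h := congrArg (coeff · ((j : ℕ) - dm)) ha
    rwa [coeff_zero, coeff_sum_C_mul_X_pow _ v (by simpa using he) (by simpa using hj)] at h

end HermiteMatrix

theorem det_hermiteMatrix_ne_zero {K : Type*} [Field K] [CharZero K] {Qs Qneg E : K[X]}
    (hQs : Qs ≠ 0) (hQneg : Qneg ≠ 0) (hE : E * Qneg = Qs * derivative Qneg)
    (hcop : IsCoprime Qs (derivative Qs + E)) {dy : ℕ}
    (hdy : dy = Qs.natDegree + Qneg.natDegree) :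
    (hermiteMatrix Qs Qneg E dy Qneg.natDegree).det ≠ 0 := by
  intro hdet
  obtain ⟨v, hv0, hv⟩ := Matrix.exists_mulVec_eq_zero_iff.2 hdet
  set dm := Qneg.natDegree
  set A := ∑ j : Fin dy with j.val < dm, C (v j) * X ^ (j : ℕ)
  set a := ∑ j : Fin dy with ¬j.val < dm, C (v j) * X ^ ((j : ℕ) - dm)
  have hA : A.degree < dm := mem_degreeLT.1 <| Submodule.sum_mem _ fun j hj =>
    mem_degreeLT.2 <| (degree_C_mul_X_pow_le _ _).trans_lt <| by
      exact_mod_cast (Finset.mem_filter.1 hj).2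
  have ha : a.degree < Qs.natDegree := mem_degreeLT.1 <| Submodule.sum_mem _ fun j hj =>
    mem_degreeLT.2 <| (degree_C_mul_X_pow_le _ _).trans_lt <| by
      have := (Finset.mem_filter.1 hj).2
      have := j.isLt
      exact_mod_cast (by omega : (j : ℕ) - dm < Qs.natDegree)
  have hzero : ∑ j, C (v j) * hermiteColumn Qs Qneg E dm j = 0 := by
    ext i
    by_cases hi : i < dy
    · simpa [hv] using coeff_sum_C_mul_hermiteColumn Qs Qneg E dm v ⟨i, hi⟩
    · rw [sum_C_mul_hermiteColumn]
      refine coeff_eq_zero_of_degree_lt ((degree_hermite_lt hQs hQneg hE hA ha).trans_le ?_)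
      rw [← hdy]
      exact_mod_cast not_lt.1 hi
  rw [sum_C_mul_hermiteColumn] at hzero
  obtain ⟨hA0, ha0⟩ := eq_zero_of_hermite_eq_zero hQneg hE hcop hA hzero
  exact hv0 (eq_zero_of_sum_C_mul_X_pow_eq_zero hA0 ha0)

section Specialization
variable {R K : Type*} [CommRing R] [Field K] (f : R →+* K) {Qs Qneg E : R[X]}

theorem map_leadingCoeff_ne_zero_of_mul [NoZeroDivisors R]
    (hlc : f (Qs * Qneg).leadingCoeff ≠ 0) : f Qs.leadingCoeff ≠ 0 ∧ f Qneg.leadingCoeff ≠ 0 := by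
  rw [leadingCoeff_mul, map_mul] at hlc
  exact ⟨left_ne_zero_of_mul hlc, right_ne_zero_of_mul hlc⟩

theorem map_ne_zero_of_map_leadingCoeff_ne_zero {p : R[X]} (h : f p.leadingCoeff ≠ 0) :
    p.map f ≠ 0 := fun h0 =>
  h (by rw [← leadingCoeff_map_of_leadingCoeff_ne_zero f h, h0, leadingCoeff_zero])

theorem map_mul_eq_mul_derivative_map (hE : E * Qneg = Qs * derivative Qneg) :
    E.map f * Qneg.map f = Qs.map f * derivative (Qneg.map f) := by
  rw [← Polynomial.map_mul, hE, Polynomial.map_mul, derivative_map]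

theorem isCoprime_map_of_natDegree_gcd_map [DecidableEq K] (hlcs : f Qs.leadingCoeff ≠ 0)
    (hlcn : f Qneg.leadingCoeff ≠ 0) (hE : E * Qneg = Qs * derivative Qneg)
    (hgcd : (gcd ((Qs * Qneg).map f) ((derivative (Qs * Qneg)).map f)).natDegree =
      Qneg.natDegree) :
    IsCoprime (Qs.map f) (derivative (Qs.map f) + E.map f) := by
  refine isCoprime_derivative_add_of_natDegree_gcd (map_ne_zero_of_map_leadingCoeff_ne_zero f hlcs)
    (map_ne_zero_of_map_leadingCoeff_ne_zero f hlcn) (map_mul_eq_mul_derivative_map f hE) ?_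
  rwa [← Polynomial.map_mul, derivative_map, natDegree_map_of_leadingCoeff_ne_zero f hlcn]

theorem map_det_hermiteMatrix_ne_zero [IsDomain R] [CharZero K] (hlcs : f Qs.leadingCoeff ≠ 0)
    (hlcn : f Qneg.leadingCoeff ≠ 0) (hE : E * Qneg = Qs * derivative Qneg)
    (hcop : IsCoprime (Qs.map f) (derivative (Qs.map f) + E.map f)) :
    f (hermiteMatrix Qs Qneg E (Qs * Qneg).natDegree Qneg.natDegree).det ≠ 0 := by
  rw [RingHom.map_det, RingHom.mapMatrix_apply, hermiteMatrix_map,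
    ← natDegree_map_of_leadingCoeff_ne_zero f hlcn]
  refine det_hermiteMatrix_ne_zero (map_ne_zero_of_map_leadingCoeff_ne_zero f hlcs)
    (map_ne_zero_of_map_leadingCoeff_ne_zero f hlcn) (map_mul_eq_mul_derivative_map f hE) hcop ?_
  have hQs : Qs ≠ 0 := by rintro rfl; simp at hlcs
  have hQneg : Qneg ≠ 0 := by rintro rfl; simp at hlcn
  rw [natDegree_mul hQs hQneg, natDegree_map_of_leadingCoeff_ne_zero f hlcs,
    natDegree_map_of_leadingCoeff_ne_zero f hlcn]

end Specialization

section Bivariate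
variable {k : Type*} [Field k]

theorem toKy_injective : Function.Injective (toKy (k := k)) :=
  map_injective _ (IsFractionRing.injective _ _)

theorem toF_apply (p : k[X][X]) :
    toF p = algebraMap (RatFunc k)[X] (RatFunc (RatFunc k)) (toKy p) :=
  rfl

theorem toKy_C (a : k[X]) : toKy (C a) = C (algebraMap k[X] (RatFunc k) a) :=
  map_C _

theorem mul_eq_hermite_of_toF_div_eq {Dy : RatFunc (RatFunc k) → RatFunc (RatFunc k)}
    (hDy : ∀ a b, Dy (a * b) = a * Dy b + b * Dy a)
    (hDyval : ∀ A : (RatFunc k)[X], Dy (kyToF A) = kyToF (derivative A))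
    {P Qs Qneg E B b : k[X][X]} {δ : k[X]} (hδ : δ ≠ 0) (hQs : Qs ≠ 0) (hQneg : Qneg ≠ 0)
    (hE : E * Qneg = Qs * derivative Qneg)
    (h : toF P / toF (Qs * Qneg) =
      Dy (toF B / (toF (C δ) * toF Qneg)) + toF b / (toF (C δ) * toF Qs)) :
    C δ * P = Qs * derivative B - E * B + Qneg * b := by
  have hc : algebraMap k[X] (RatFunc k) δ ≠ 0 := by simpa using hδ
  have key := div_eq_deriv_div_add_div_iff (P := toKy P) (B := toKy B) (b := toKy b) hDy hDyval
    hc ((map_ne_zero_iff _ toKy_injective).2 hQs) ((map_ne_zero_iff _ toKy_injective).2 hQneg)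
    (map_mul_eq_mul_derivative_map _ hE)
  simp only [map_mul] at key
  have hdB : toKy (derivative B) = derivative (toKy B) := (derivative_map B _).symm
  apply toKy_injective
  simp only [map_mul, map_sub, map_add, toKy_C, hdB]
  exact key.1 (by simpa only [toF_apply, map_mul, toKy_C] using h)

end Bivariate

theorem stmt_6_general {k : Type*} [Field k] [CharZero k] [DecidableEq k]
    (P Q : Polynomial (Polynomial k))
    (Qs Qneg : Polynomial (Polynomial k))
    (hQneg : Q = Qs * Qneg)
    (E : Polynomial (Polynomial k))
    (hE : E * Qneg = Qs * Polynomial.derivative Qneg)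
    (δ : Polynomial k)
    (hδ : δ = (hermiteMat Qs Qneg E Q.natDegree Qneg.natDegree).det)
    (Dy : RatFunc (RatFunc k) → RatFunc (RatFunc k)) (hDy : IsDeriv Dy)
    (hDyval : ∀ A : Polynomial (RatFunc k), Dy (kyToF A) = kyToF (Polynomial.derivative A))
    (B b : Polynomial (Polynomial k))
    (hB : B.degree < (Qneg.natDegree : WithBot ℕ))
    (heq : toF P / toF Q =
      Dy (toF B / (toF (Polynomial.C δ) * toF Qneg)) +
        toF b / (toF (Polynomial.C δ) * toF Qs))
    (x₀ : k)
    (hlc : Q.leadingCoeff.eval x₀ ≠ 0)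
    (hgcd : (gcd (Q.map (Polynomial.evalRingHom x₀))
      ((Polynomial.derivative Q).map (Polynomial.evalRingHom x₀))).natDegree = Qneg.natDegree)
    (Dk : RatFunc k → RatFunc k) (hDk : IsDeriv Dk)
    (hDkval : ∀ p : Polynomial k,
      Dk (algebraMap (Polynomial k) (RatFunc k) p) =
        algebraMap (Polynomial k) (RatFunc k) (Polynomial.derivative p)) :
    δ.eval x₀ ≠ 0 ∧
    (algebraMap (Polynomial k) (RatFunc k) (P.map (Polynomial.evalRingHom x₀)) /
        algebraMap (Polynomial k) (RatFunc k) (Q.map (Polynomial.evalRingHom x₀)) =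
      Dk (algebraMap (Polynomial k) (RatFunc k) (B.map (Polynomial.evalRingHom x₀)) /
          algebraMap (Polynomial k) (RatFunc k)
            (Polynomial.C (δ.eval x₀) * Qneg.map (Polynomial.evalRingHom x₀))) +
        algebraMap (Polynomial k) (RatFunc k) (b.map (Polynomial.evalRingHom x₀)) /
          algebraMap (Polynomial k) (RatFunc k)
            (Polynomial.C (δ.eval x₀) * Qs.map (Polynomial.evalRingHom x₀))) ∧
    ∀ B' b' : Polynomial k,
      B'.degree < (Qneg.natDegree : WithBot ℕ) →
      b'.degree < (Qs.natDegree : WithBot ℕ) →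
      (algebraMap (Polynomial k) (RatFunc k) (P.map (Polynomial.evalRingHom x₀)) /
          algebraMap (Polynomial k) (RatFunc k) (Q.map (Polynomial.evalRingHom x₀)) =
        Dk (algebraMap (Polynomial k) (RatFunc k) B' /
            algebraMap (Polynomial k) (RatFunc k)
              (Polynomial.C (δ.eval x₀) * Qneg.map (Polynomial.evalRingHom x₀))) +
          algebraMap (Polynomial k) (RatFunc k) b' /
            algebraMap (Polynomial k) (RatFunc k)
              (Polynomial.C (δ.eval x₀) * Qs.map (Polynomial.evalRingHom x₀))) →
      B' = B.map (Polynomial.evalRingHom x₀) ∧ b' = b.map (Polynomial.evalRingHom x₀) := by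
  subst hQneg
  set φ := evalRingHom x₀
  obtain ⟨hlcs, hlcn⟩ := map_leadingCoeff_ne_zero_of_mul φ hlc
  have hQs₀ := map_ne_zero_of_map_leadingCoeff_ne_zero φ hlcs
  have hQneg₀ := map_ne_zero_of_map_leadingCoeff_ne_zero φ hlcn
  have hE₀ := map_mul_eq_mul_derivative_map φ hE
  have hcop := isCoprime_map_of_natDegree_gcd_map φ hlcs hlcn hE hgcd
  have hδ₀ : δ.eval x₀ ≠ 0 := by
    rw [hδ, hermiteMat_eq_hermiteMatrix]
    exact map_det_hermiteMatrix_ne_zero φ hlcs hlcn hE hcop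
  have hpoly := mul_eq_hermite_of_toF_div_eq hDy.2 hDyval (by rintro rfl; simp at hδ₀)
    (by rintro rfl; simp at hlcs) (by rintro rfl; simp at hlcn) hE heq
  have hpoly₀ : C (δ.eval x₀) * P.map φ =
      Qs.map φ * derivative (B.map φ) - E.map φ * B.map φ + Qneg.map φ * b.map φ := by
    simpa [φ, ← derivative_map] using congrArg (map φ) hpoly
  have hiff := fun B' b' => div_eq_deriv_div_add_div_iff (P := P.map φ) (B := B') (b := b')
    hDk.2 hDkval hδ₀ hQs₀ hQneg₀ hE₀
  rw [Polynomial.map_mul]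
  refine ⟨hδ₀, (hiff _ _).2 hpoly₀, fun B' b' hB' _ h => ?_⟩
  rw [← natDegree_map_of_leadingCoeff_ne_zero φ hlcn] at hB hB'
  exact hermite_injective hQneg₀ hE₀ hcop hB' (degree_map_le.trans_lt hB)
    (((hiff _ _).1 h).symm.trans hpoly₀)

/-- Lemma `le:commutative`. Under Hypothesis (H), let `δ = det H(Q)` and let
`B, b ∈ k[x,y]` satisfy `deg_y(B) < d_y⁻`, `deg_y(b) < d_y*`, and
`P/Q = D_y(B/(δ·Q⁻)) + b/(δ·Q*)`. Let `x₀ ∈ k` be lucky for `Q`. Then `δ(x₀) ≠ 0` and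
`(B(x₀,y), b(x₀,y))` is the unique pair of polynomials in `k[y]` of degrees less than `d_y⁻`
and `d_y*` with `P(x₀,y)/Q(x₀,y) = D_y(B(x₀,y)/(δ(x₀)·Q⁻(x₀,y))) + b(x₀,y)/(δ(x₀)·Q*(x₀,y))`. -/
theorem stmt_6 {k : Type*} [Field k] [CharZero k] [DecidableEq k]
    (P Q : Polynomial (Polynomial k))
    (hP : P ≠ 0) (hQ : Q ≠ 0)
    (hPQdeg : P.degree < Q.degree)
    (hPQcop : IsRelPrime P Q)
    (hQprimY : Q.IsPrimitive)
    (m : ℕ) (hm : 0 < m) (q : Polynomial k) (Qi : ℕ → Polynomial (Polynomial k))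
    (hfac : Q = Polynomial.C q * ∏ i ∈ Finset.range m, Qi i ^ (i + 1))
    (hQiprim : ∀ i < m, (Qi i).IsPrimitive)
    (hQisqf : ∀ i < m, Squarefree (Qi i))
    (hQicop : ∀ i < m, ∀ j < m, i ≠ j → IsRelPrime (Qi i) (Qi j))
    (hQim : 0 < (Qi (m - 1)).natDegree)
    (Qs Qneg : Polynomial (Polynomial k))
    (hQs : Qs = ∏ i ∈ Finset.range m, Qi i)
    (hQneg : Q = Qs * Qneg)
    (E : Polynomial (Polynomial k))
    (hE : E * Qneg = Qs * Polynomial.derivative Qneg)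
    (δ : Polynomial k)
    (hδ : δ = (hermiteMat Qs Qneg E Q.natDegree Qneg.natDegree).det)
    (Dy : RatFunc (RatFunc k) → RatFunc (RatFunc k)) (hDy : IsDeriv Dy)
    (hDyval : ∀ A : Polynomial (RatFunc k), Dy (kyToF A) = kyToF (Polynomial.derivative A))
    (B b : Polynomial (Polynomial k))
    (hB : B.degree < (Qneg.natDegree : WithBot ℕ))
    (hb : b.degree < (Qs.natDegree : WithBot ℕ))
    (heq : toF P / toF Q =
      Dy (toF B / (toF (Polynomial.C δ) * toF Qneg)) +
        toF b / (toF (Polynomial.C δ) * toF Qs))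
    (x₀ : k)
    (hlc : Q.leadingCoeff.eval x₀ ≠ 0)
    (hgcd : (gcd (Q.map (Polynomial.evalRingHom x₀))
      ((Polynomial.derivative Q).map (Polynomial.evalRingHom x₀))).natDegree = Qneg.natDegree)
    (Dk : RatFunc k → RatFunc k) (hDk : IsDeriv Dk)
    (hDkval : ∀ p : Polynomial k,
      Dk (algebraMap (Polynomial k) (RatFunc k) p) =
        algebraMap (Polynomial k) (RatFunc k) (Polynomial.derivative p)) :
    δ.eval x₀ ≠ 0 ∧
    (algebraMap (Polynomial k) (RatFunc k) (P.map (Polynomial.evalRingHom x₀)) /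
        algebraMap (Polynomial k) (RatFunc k) (Q.map (Polynomial.evalRingHom x₀)) =
      Dk (algebraMap (Polynomial k) (RatFunc k) (B.map (Polynomial.evalRingHom x₀)) /
          algebraMap (Polynomial k) (RatFunc k)
            (Polynomial.C (δ.eval x₀) * Qneg.map (Polynomial.evalRingHom x₀))) +
        algebraMap (Polynomial k) (RatFunc k) (b.map (Polynomial.evalRingHom x₀)) /
          algebraMap (Polynomial k) (RatFunc k)
            (Polynomial.C (δ.eval x₀) * Qs.map (Polynomial.evalRingHom x₀))) ∧
    ∀ B' b' : Polynomial k,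
      B'.degree < (Qneg.natDegree : WithBot ℕ) →
      b'.degree < (Qs.natDegree : WithBot ℕ) →
      (algebraMap (Polynomial k) (RatFunc k) (P.map (Polynomial.evalRingHom x₀)) /
          algebraMap (Polynomial k) (RatFunc k) (Q.map (Polynomial.evalRingHom x₀)) =
        Dk (algebraMap (Polynomial k) (RatFunc k) B' /
            algebraMap (Polynomial k) (RatFunc k)
              (Polynomial.C (δ.eval x₀) * Qneg.map (Polynomial.evalRingHom x₀))) +
          algebraMap (Polynomial k) (RatFunc k) b' /
            algebraMap (Polynomial k) (RatFunc k)
              (Polynomial.C (δ.eval x₀) * Qs.map (Polynomial.evalRingHom x₀))) →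
      B' = B.map (Polynomial.evalRingHom x₀) ∧ b' = b.map (Polynomial.evalRingHom x₀) :=
  stmt_6_general P Q Qs Qneg hQneg E hE δ hδ Dy hDy hDyval B b hB heq x₀ hlc hgcd Dk hDk hDkval
end
end
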